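/- arXiv:2307.11322 — 2 statements merged into one kernel-verified Lean document; each statement's English description precedes it below -/
import Mathlib

section
/- Let X be a compact metric space, T : X → X a continuous map, and (h_n)_{n≥1} a sequence of continuous functions h_n : X → ℝ that is almost additive with respect to T with constant C > 0, and suppose lim_{n→∞} ‖h_n‖_∞/n = 0. Then for every k-periodic point x₀ ∈ X (i.e. T^k(x₀) = x₀ for some k ≥ 1) one has |h_{qk}(x₀)| ≤ C for every q ≥ 1. -/
/-!
Put `p = q k`, so that `x₀` is a fixed point of `T^p`, and `b n = h_{n p}(x₀)`. Almost additivity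
at a fixed point of `T^p` says that `b` is additive up to `C`: `|b (n + 1) - b n - b 1| ≤ C`.
Hence `|b n / n - b 1| ≤ (1 - 1/n) C`, and `b n / n → 0` because `|b n| ≤ ‖h_{n p}‖_∞ = o(n)`.
Letting `n → ∞` gives `|b 1| ≤ C`.
-/

open Filter Topology

def IsAlmostAdditive {X : Type*} (T : X → X) (h : ℕ → X → ℝ) (C : ℝ) : Prop :=
  ∀ (x : X) (n m : ℕ), 1 ≤ n → 1 ≤ m →
    -C + h n x + h m (T^[n] x) ≤ h (n + m) x ∧ h (n + m) x ≤ h n x + h m (T^[n] x) + C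

namespace IsAlmostAdditive

variable {X : Type*} {T : X → X} {h : ℕ → X → ℝ} {C : ℝ}

theorem abs_sub_le (hAA : IsAlmostAdditive T h C) (x : X) {n m : ℕ} (hn : 1 ≤ n) (hm : 1 ≤ m) :
    |h (n + m) x - h n x - h m (T^[n] x)| ≤ C := by
  obtain ⟨hlow, hupp⟩ := hAA x n m hn hm
  rw [abs_le]
  constructor <;> linarith

theorem abs_sub_le_of_iterate_eq (hAA : IsAlmostAdditive T h C) {p : ℕ} (hp : 1 ≤ p) {y : X}
    (hy : T^[p] y = y) {n : ℕ} (hn : 1 ≤ n) :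
    |h ((n + 1) * p) y - h (n * p) y - h p y| ≤ C := by
  have hy' : T^[n * p] y = y := (Function.IsPeriodicPt.const_mul hy n).eq
  have := hAA.abs_sub_le y (Nat.one_le_iff_ne_zero.mpr (by positivity) : 1 ≤ n * p) hp
  rwa [hy', ← Nat.succ_mul] at this

end IsAlmostAdditive

theorem abs_sub_mul_le_of_abs_succ_sub_le {b : ℕ → ℝ} {C : ℝ}
    (hstep : ∀ n, 1 ≤ n → |b (n + 1) - b n - b 1| ≤ C) :
    ∀ n, 1 ≤ n → |b n - n * b 1| ≤ (n - 1) * C := by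
  refine Nat.le_induction (by simp) fun n hn ih => ?_
  calc |b (n + 1) - ↑(n + 1) * b 1|
      = |(b (n + 1) - b n - b 1) + (b n - n * b 1)| := by push_cast; ring_nf
    _ ≤ |b (n + 1) - b n - b 1| + |b n - n * b 1| := abs_add_le _ _
    _ ≤ C + (n - 1) * C := add_le_add (hstep n hn) ih
    _ = (↑(n + 1) - 1) * C := by push_cast; ring

theorem abs_le_of_abs_succ_sub_le_of_tendsto_div {b : ℕ → ℝ} {C : ℝ}
    (hstep : ∀ n, 1 ≤ n → |b (n + 1) - b n - b 1| ≤ C)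
    (hlim : Tendsto (fun n : ℕ => b n / n) atTop (𝓝 0)) :
    |b 1| ≤ C := by
  have hleft : Tendsto (fun n : ℕ => |b n / n - b 1|) atTop (𝓝 |b 1|) := by
    simpa using (hlim.sub_const (b 1)).abs
  have hright : Tendsto (fun n : ℕ => (1 - 1 / (n : ℝ)) * C) atTop (𝓝 C) := by
    simpa using (tendsto_one_div_atTop_nhds_zero_nat.const_sub (1 : ℝ)).mul_const C
  refine le_of_tendsto_of_tendsto hleft hright ?_
  filter_upwards [eventually_ge_atTop 1] with n hn
  have hnpos : (0 : ℝ) < n := by exact_mod_cast hn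
  calc |b n / n - b 1| = |b n - n * b 1| / n := by
        rw [div_sub' hnpos.ne', abs_div, abs_of_pos hnpos]
    _ ≤ (n - 1) * C / n := by gcongr; exact abs_sub_mul_le_of_abs_succ_sub_le hstep n hn
    _ = (1 - 1 / (n : ℝ)) * C := by field_simp

theorem tendsto_div_of_tendsto_iSup_abs_div {X : Type*} [TopologicalSpace X] [CompactSpace X]
    {h : ℕ → X → ℝ} (hcont : ∀ n, Continuous (h n))
    (hlim : Tendsto (fun n : ℕ => (⨆ x : X, |h n x|) / (n : ℝ)) atTop (𝓝 0)) (y : X) :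
    Tendsto (fun n : ℕ => h n y / n) atTop (𝓝 0) := by
  refine squeeze_zero_norm (fun n => ?_) hlim
  rw [Real.norm_eq_abs, abs_div, Nat.abs_cast]
  gcongr
  exact le_ciSup (isCompact_range (hcont n).abs).bddAbove y

theorem Filter.Tendsto.comp_mul_div_natCast {b : ℕ → ℝ}
    (hb : Tendsto (fun n : ℕ => b n / n) atTop (𝓝 0)) {p : ℕ} (hp : 1 ≤ p) :
    Tendsto (fun n : ℕ => b (n * p) / n) atTop (𝓝 0) := by
  have hsub : Tendsto (fun n : ℕ => b (n * p) / (n * p : ℕ) * p) atTop (𝓝 0) := by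
    simpa using (hb.comp (tendsto_id.atTop_mul_const' hp)).mul_const (p : ℝ)
  refine hsub.congr fun n => ?_
  have hpos : (p : ℝ) ≠ 0 := by positivity
  rw [Nat.cast_mul, div_mul_eq_div_div, div_mul_cancel₀ _ hpos]

theorem statement2_general {X : Type*} [MetricSpace X] [CompactSpace X]
    (T : X → X)
    (h : ℕ → X → ℝ) (hcont : ∀ n, Continuous (h n))
    (C : ℝ)
    (hAA : ∀ (x : X) (n m : ℕ), 1 ≤ n → 1 ≤ m →
      -C + h n x + h m (T^[n] x) ≤ h (n + m) x ∧
        h (n + m) x ≤ h n x + h m (T^[n] x) + C)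
    (hlim : Tendsto (fun n : ℕ => (⨆ x : X, |h n x|) / (n : ℝ)) atTop (nhds 0))
    (x₀ : X) (k : ℕ) (hk : 1 ≤ k) (hper : T^[k] x₀ = x₀) :
    ∀ (q : ℕ), 1 ≤ q → |h (q * k) x₀| ≤ C := by
  intro q hq
  have hp : 1 ≤ q * k := Nat.one_le_iff_ne_zero.mpr (by positivity)
  have hfix : T^[q * k] x₀ = x₀ := (Function.IsPeriodicPt.const_mul hper q).eq
  have hdiv : Tendsto (fun n : ℕ => h (n * (q * k)) x₀ / n) atTop (𝓝 0) :=
    (tendsto_div_of_tendsto_iSup_abs_div hcont hlim x₀).comp_mul_div_natCast hp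
  simpa using abs_le_of_abs_succ_sub_le_of_tendsto_div
    (fun n hn => by simpa using IsAlmostAdditive.abs_sub_le_of_iterate_eq hAA hp hfix hn) hdiv

theorem statement2 {X : Type*} [MetricSpace X] [CompactSpace X]
    (T : X → X) (hT : Continuous T)
    (h : ℕ → X → ℝ) (hcont : ∀ n, Continuous (h n))
    (C : ℝ) (hC : 0 < C)
    (hAA : ∀ (x : X) (n m : ℕ), 1 ≤ n → 1 ≤ m →
      -C + h n x + h m (T^[n] x) ≤ h (n + m) x ∧
        h (n + m) x ≤ h n x + h m (T^[n] x) + C)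
    (hlim : Tendsto (fun n : ℕ => (⨆ x : X, |h n x|) / (n : ℝ)) atTop (nhds 0))
    (x₀ : X) (k : ℕ) (hk : 1 ≤ k) (hper : T^[k] x₀ = x₀) :
    ∀ (q : ℕ), 1 ≤ q → |h (q * k) x₀| ≤ C :=
  statement2_general T h hcont C hAA hlim x₀ k hk hper
end

section
/- (Livšic-type theorem) Let (X,d) be a compact metric space and T : X → X a continuous map satisfying the Closing Lemma and having a point with dense orbit. Let f : X → ℝ be a continuous function satisfying the Walters property. Then f is cohomologous to zero (i.e. there exists a continuous q : X → ℝ with f = q∘T − q) if and only if S_n f(x) = 0 for every x ∈ X and n ≥ 1 with T^n(x) = x. -/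
open Filter Topology

/-- Birkhoff sum `S_n f = ∑_{k=0}^{n-1} f ∘ T^k`. -/
noncomputable def birkhoff {X : Type*} (T : X → X) (f : X → ℝ) (n : ℕ) (x : X) : ℝ :=
  ∑ k ∈ Finset.range n, f (T^[k] x)

lemma birkhoff_add {X : Type*} (T : X → X) (f : X → ℝ) (n m : ℕ) (x : X) :
    birkhoff T f (n + m) x = birkhoff T f n x + birkhoff T f m (T^[n] x) := by
  unfold birkhoff
  rw [Finset.sum_range_add]
  congr 1
  apply Finset.sum_congr rfl
  intro k _
  rw [← Function.iterate_add_apply, Nat.add_comm]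

lemma birkhoff_succ {X : Type*} (T : X → X) (f : X → ℝ) (n : ℕ) (x : X) :
    birkhoff T f (n + 1) x = birkhoff T f n x + f (T^[n] x) := by
  unfold birkhoff
  rw [Finset.sum_range_succ]

theorem statement6 {X : Type*} [MetricSpace X] [CompactSpace X]
    (T : X → X) (hT : Continuous T)
    (hClosing : ∀ ε > (0 : ℝ), ∃ δ > (0 : ℝ), ∀ (x : X) (n : ℕ), 1 ≤ n →
      dist (T^[n] x) x < δ →
      ∃ y : X, T^[n] y = y ∧ ∀ k < n, dist (T^[k] x) (T^[k] y) < ε)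
    (hDense : ∃ x : X, Dense (Set.range fun n : ℕ => T^[n] x))
    (f : X → ℝ) (hf : Continuous f)
    (hWalters : ∀ κ > (0 : ℝ), ∃ ε > (0 : ℝ), ∀ (x y : X) (n : ℕ), 1 ≤ n →
      (∀ k < n, dist (T^[k] x) (T^[k] y) < ε) →
        |birkhoff T f n x - birkhoff T f n y| < κ) :
    (∃ q : X → ℝ, Continuous q ∧ ∀ x : X, f x = q (T x) - q x) ↔
      ∀ (x : X) (n : ℕ), 1 ≤ n → T^[n] x = x → birkhoff T f n x = 0 := by
  constructor
  · rintro ⟨q, _, hq⟩ x n _ hx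
    have : birkhoff T f n x = q (T^[n] x) - q (T^[0] x) := by
      have : ∀ k, f (T^[k] x) = q (T^[k+1] x) - q (T^[k] x) := by
        intro k
        rw [Function.iterate_succ_apply']
        exact hq _
      unfold birkhoff
      rw [Finset.sum_congr rfl (fun k _ => this k), Finset.sum_range_sub (fun k => q (T^[k] x))]
    rw [this, hx]
    simp
  · intro hPer
    obtain ⟨x₀, hx₀⟩ := hDense
    set g : ℕ → ℝ := fun n => birkhoff T f n x₀ with hg
    -- Key estimate
    have keyA : ∀ κ > (0 : ℝ), ∃ ε > (0 : ℝ), ∀ n m : ℕ,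
        dist (T^[n] x₀) (T^[m] x₀) < ε → |g n - g m| < κ := by
      intro κ hκ
      obtain ⟨ε₁, hε₁, hW⟩ := hWalters κ hκ
      obtain ⟨δ, hδ, hC⟩ := hClosing ε₁ hε₁
      refine ⟨δ, hδ, ?_⟩
      have main : ∀ n m : ℕ, n ≤ m → dist (T^[n] x₀) (T^[m] x₀) < δ → |g n - g m| < κ := by
        intro n m hnm hd
        rcases eq_or_lt_of_le hnm with h | h
        · subst h; simpa using hκ
        · set p := m - n with hp
          have hp1 : 1 ≤ p := by omega
          have hmn : n + p = m := by omega
          set z := T^[n] x₀ with hz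
          have hTpz : T^[p] z = T^[m] x₀ := by
            rw [hz, ← Function.iterate_add_apply]
            congr 1
            omega
          have hdz : dist (T^[p] z) z < δ := by
            rw [hTpz, hz, dist_comm]; exact hd
          obtain ⟨y, hy, hshadow⟩ := hC z p hp1 hdz
          have h1 : |birkhoff T f p z - birkhoff T f p y| < κ := hW z y p hp1 hshadow
          have h2 : birkhoff T f p y = 0 := hPer y p hp1 hy
          have h3 : g m = g n + birkhoff T f p z := by
            rw [hg, ← hmn]
            exact birkhoff_add T f n p x₀
          rw [h2, sub_zero] at h1
          have : g n - g m = -(birkhoff T f p z) := by rw [h3]; ring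
          rw [this, abs_neg]
          exact h1
      intro n m hd
      rcases le_total n m with h | h
      · exact main n m h hd
      · rw [abs_sub_comm]
        exact main m n h (by rwa [dist_comm])
    -- Well-definedness
    have wd : ∀ n m : ℕ, T^[n] x₀ = T^[m] x₀ → g n = g m := by
      intro n m h
      by_contra hne
      have hpos : |g n - g m| > 0 := by
        simp only [gt_iff_lt, abs_pos, sub_ne_zero]
        exact fun hc => hne hc
      obtain ⟨ε, hε, hA⟩ := keyA |g n - g m| hpos
      have : |g n - g m| < |g n - g m| := hA n m (by rw [h]; simpa using hε)
      exact absurd this (lt_irrefl _)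
    set S : Set X := Set.range fun n : ℕ => T^[n] x₀ with hS
    set φ : S → ℝ := fun s => g s.2.choose with hφ
    have hφval : ∀ s : S, T^[s.2.choose] x₀ = s.val := fun s => s.2.choose_spec
    have hφeq : ∀ (s : S) (n : ℕ), T^[n] x₀ = s.val → φ s = g n := by
      intro s n hn
      exact wd _ n (by rw [hφval s, hn])
    -- uniform continuity of φ
    have hφuc : UniformContinuous φ := by
      rw [Metric.uniformContinuous_iff]
      intro κ hκ
      obtain ⟨ε, hε, hA⟩ := keyA κ hκ
      refine ⟨ε, hε, ?_⟩
      intro a b hab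
      rw [Subtype.dist_eq] at hab
      have : dist (T^[a.2.choose] x₀) (T^[b.2.choose] x₀) < ε := by
        rwa [hφval a, hφval b]
      simpa [hφ, Real.dist_eq] using hA _ _ this
    -- extend φ to X
    have hui : IsUniformInducing (Subtype.val : S → X) :=
      isUniformEmbedding_subtype_val.isUniformInducing
    have hdr : DenseRange (Subtype.val : S → X) := by
      rw [DenseRange, Subtype.range_coe]
      exact hx₀
    have hdi : IsDenseInducing (Subtype.val : S → X) := hui.isDenseInducing hdr
    set q : X → ℝ := hdi.extend φ with hq
    have hqc : Continuous q := (uniformContinuous_uniformly_extend hui hdr hφuc).continuous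
    have hqext : ∀ s : S, q s.val = φ s := fun s => hdi.extend_eq hφuc.continuous s
    have hqorb : ∀ n : ℕ, q (T^[n] x₀) = g n := by
      intro n
      have hmem : T^[n] x₀ ∈ S := ⟨n, rfl⟩
      have := hqext ⟨T^[n] x₀, hmem⟩
      rw [this, hφeq ⟨T^[n] x₀, hmem⟩ n rfl]
    refine ⟨q, hqc, ?_⟩
    have heq : Set.EqOn f (fun x => q (T x) - q x) S := by
      rintro x ⟨n, rfl⟩
      simp only
      have h1 : T (T^[n] x₀) = T^[n+1] x₀ := (Function.iterate_succ_apply' T n x₀).symm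
      rw [h1, hqorb, hqorb]
      have := birkhoff_succ T f n x₀
      simp only [hg]
      rw [this]
      ring
    have : f = fun x => q (T x) - q x :=
      Continuous.ext_on hx₀ hf ((hqc.comp hT).sub hqc) heq
    intro x
    rw [this]
end
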